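/- (Key computation in Proposition 4.2: the right twist of the quadratic difference X^{a−2,a−1,b−2,b−1,c−2,c−1} is a product of three frozen Plücker coordinates with the Plücker coordinate Δ_{a,b,c}.) For all vectors p₁, p₂, p₃, q₁, q₂, q₃, r₁, r₂, r₃ ∈ ℝ³, det( (p₁×p₂)×(p₂×p₃), (q₁×q₂)×(q₂×q₃), (r₁×r₂)×(r₂×r₃) ) = det(p₁,p₂,p₃)·det(q₁,q₂,q₃)·det(r₁,r₂,r₃)·det(p₂,q₂,r₂). -/

import Mathlib

/-!
By the vector triple product expansion, `(a × b) × (b × c) = det(a, b, c) • b`, because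
`b ⬝ (a × b) = 0`. So the three columns are `p₂, q₂, r₂` rescaled by the three frozen
determinants, which trilinearity pulls out of `det`.
-/

noncomputable def det3 (a b c : Fin 3 → ℝ) : ℝ :=
  (Matrix.of ![a, b, c]).transpose.det

def cross (a b : Fin 3 → ℝ) : Fin 3 → ℝ := crossProduct a b

open Matrix

theorem det3_eq_dotProduct_cross (a b c : Fin 3 → ℝ) : det3 a b c = a ⬝ᵥ b ⨯₃ c := by
  rw [det3, det_transpose, triple_product_eq_det]
  rfl

theorem cross_cross_cross_eq_det3_smul (a b c : Fin 3 → ℝ) :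
    cross (cross a b) (cross b c) = det3 a b c • b := by
  rw [cross, cross, cross, cross_cross_eq_smul_sub_smul', dot_cross_self, zero_smul, sub_zero,
    dotProduct_comm, triple_product_permutation, det3_eq_dotProduct_cross]

theorem det3_smul (x y z : ℝ) (a b c : Fin 3 → ℝ) :
    det3 (x • a) (y • b) (z • c) = x * y * z * det3 a b c := by
  simp only [det3_eq_dotProduct_cross, map_smul, LinearMap.smul_apply, dotProduct_smul,
    smul_dotProduct, smul_eq_mul]
  ring

/-- Key computation in Proposition 4.2: the right twist of the quadratic difference
`X^{a−2,a−1,b−2,b−1,c−2,c−1}` is a product of three frozen Plücker coordinates with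
the Plücker coordinate `Δ_{a,b,c}`. -/
theorem twist_of_quadratic_difference
    (p₁ p₂ p₃ q₁ q₂ q₃ r₁ r₂ r₃ : Fin 3 → ℝ) :
    det3 (cross (cross p₁ p₂) (cross p₂ p₃))
         (cross (cross q₁ q₂) (cross q₂ q₃))
         (cross (cross r₁ r₂) (cross r₂ r₃))
      = det3 p₁ p₂ p₃ * det3 q₁ q₂ q₃ * det3 r₁ r₂ r₃ * det3 p₂ q₂ r₂ := by
  simp only [cross_cross_cross_eq_det3_smul, det3_smul]
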